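/- Let s ∈ (0,1), set β = s²/(2√(1 − s²)) and k² = (1 − s²)/(2 − s²) with k > 0. Then ∫₀^{arcsin s} 2/√(4β² − sin²θ tan²θ) dθ = (2k/s)·K(k²), where K(m) = ∫₀^{π/2} (1 − m sin²t)^{−1/2} dt is the complete elliptic integral of the first kind. -/

import Mathlib

/-!
Substitute `sin θ = s cos x`, i.e. `θ = arcsin (s cos x)`, which maps `(0, π/2)` bijectively onto
`(0, arcsin s)`. Since `sin²θ tan²θ = u⁴/(1 - u²)` for `u = sin θ`, the radicand becomes
`s⁴ sin²x (1 + (1 - s²) cos²x) / ((1 - s²)(1 - s² cos²x))`, and the Jacobian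
`s sin x / √(1 - s² cos²x)` cancels both singular factors, leaving
`(2k/s) (1 - k² sin²x)^{-1/2}` because `1 - k² sin²x = (1 + (1 - s²) cos²x)/(2 - s²)`.
-/

open Real intervalIntegral

/-- The complete elliptic integral of the first kind,
`K(m) = ∫₀^{π/2} (1 − m sin²t)^{−1/2} dt`. -/
noncomputable def ellK (m : ℝ) : ℝ :=
  ∫ t in (0:ℝ)..(Real.pi / 2), (Real.sqrt (1 - m * Real.sin t ^ 2))⁻¹

open Set

lemma sin_arcsin_sq_mul_tan_arcsin_sq {u : ℝ} (h₁ : -1 ≤ u) (h₂ : u ≤ 1) :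
    sin (arcsin u) ^ 2 * tan (arcsin u) ^ 2 = u ^ 4 / (1 - u ^ 2) := by
  rw [sin_arcsin h₁ h₂, tan_arcsin, div_pow, sq_sqrt (by nlinarith)]
  ring

section ArcsinMulCos

variable {s x : ℝ}

lemma mul_cos_mem_Ioo (hs0 : 0 < s) (hx : x ∈ Ioo 0 (π / 2)) :
    s * cos x ∈ Ioo 0 s := by
  have hcos_pos : 0 < cos x := cos_pos_of_mem_Ioo ⟨by linarith [hx.1, pi_pos], hx.2⟩
  have hcos_lt : cos x < cos 0 :=
    strictAntiOn_cos ⟨le_rfl, pi_pos.le⟩ ⟨hx.1.le, by linarith [hx.2, pi_pos]⟩ hx.1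
  rw [cos_zero] at hcos_lt
  exact ⟨by positivity, by nlinarith⟩

lemma hasDerivAt_arcsin_mul_cos (h₁ : s * cos x ≠ -1) (h₂ : s * cos x ≠ 1) :
    HasDerivAt (fun y => arcsin (s * cos y)) (-(s * sin x) / √(1 - (s * cos x) ^ 2)) x := by
  refine ((hasDerivAt_arcsin h₁ h₂).comp x ((hasDerivAt_cos x).const_mul s)).congr_deriv ?_
  ring

lemma injOn_arcsin_mul_cos (hs0 : 0 < s) (hs1 : s ≤ 1) :
    InjOn (fun y => arcsin (s * cos y)) (Icc 0 π) := by
  have hmem : ∀ y, s * cos y ∈ Icc (-1) 1 := fun y => by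
    constructor <;> nlinarith [neg_one_le_cos y, cos_le_one y]
  intro x hx y hy hxy
  exact injOn_cos hx hy (mul_left_cancel₀ hs0.ne' (injOn_arcsin (hmem x) (hmem y) hxy))

lemma image_arcsin_mul_cos_Ioo (hs0 : 0 < s) (hs1 : s ≤ 1) :
    (fun y => arcsin (s * cos y)) '' Ioo 0 (π / 2) = Ioo 0 (arcsin s) := by
  ext θ
  constructor
  · rintro ⟨x, hx, rfl⟩
    obtain ⟨hu0, hus⟩ := mul_cos_mem_Ioo hs0 hx
    exact ⟨arcsin_pos.2 hu0,
      strictMonoOn_arcsin ⟨by linarith, by linarith⟩ ⟨by linarith, hs1⟩ hus⟩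
  · rintro ⟨hθ0, hθs⟩
    have hθ : θ < π / 2 := hθs.trans_le (arcsin_le_pi_div_two s)
    have hsin_pos : 0 < sin θ := sin_pos_of_pos_of_lt_pi hθ0 (by linarith [pi_pos])
    have hsin_lt : sin θ < s := by
      simpa [sin_arcsin (by linarith) hs1] using
        strictMonoOn_sin ⟨by linarith, hθ.le⟩ ⟨by linarith, arcsin_le_pi_div_two s⟩ hθs
    have hr0 : 0 < sin θ / s := div_pos hsin_pos hs0
    have hr1 : sin θ / s < 1 := (div_lt_one hs0).2 hsin_lt
    refine ⟨arccos (sin θ / s), ⟨arccos_pos.2 hr1, arccos_lt_pi_div_two.2 hr0⟩, ?_⟩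
    dsimp only
    rw [cos_arccos (by linarith) hr1.le, mul_div_cancel₀ _ hs0.ne',
      arcsin_sin (by linarith) hθ.le]

end ArcsinMulCos

lemma radicand_arcsin_mul_cos {s x : ℝ} (h₁ : 1 - s ^ 2 ≠ 0) (h₂ : 1 - (s * cos x) ^ 2 ≠ 0) :
    s ^ 4 / (1 - s ^ 2) - (s * cos x) ^ 4 / (1 - (s * cos x) ^ 2)
      = (s ^ 2 * sin x) ^ 2 * (1 + (1 - s ^ 2) * cos x ^ 2)
          / ((1 - s ^ 2) * (1 - (s * cos x) ^ 2)) := by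
  rw [div_sub_div _ _ h₁ h₂, mul_comm (1 - s ^ 2)]
  congr 1
  linear_combination (-(1 + (1 - s ^ 2) * cos x ^ 2)) * s ^ 4 * (sin_sq x)

lemma abs_deriv_mul_integrand_arcsin_mul_cos {s k x : ℝ} (hs0 : 0 < s) (hs1 : s < 1)
    (hk : 0 < k) (hk2 : k ^ 2 = (1 - s ^ 2) / (2 - s ^ 2)) (hx : x ∈ Ioo 0 (π / 2)) :
    |-(s * sin x) / √(1 - (s * cos x) ^ 2)| *
        (2 / √(s ^ 4 / (1 - s ^ 2) -
          sin (arcsin (s * cos x)) ^ 2 * tan (arcsin (s * cos x)) ^ 2))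
      = 2 * k / s * (√(1 - k ^ 2 * sin x ^ 2))⁻¹ := by
  obtain ⟨hu0, hus⟩ := mul_cos_mem_Ioo hs0 hx
  have hsin : 0 < sin x := sin_pos_of_pos_of_lt_pi hx.1 (by linarith [hx.2, pi_pos])
  have hc : 0 < 1 - s ^ 2 := by nlinarith
  have hc' : 0 < 2 - s ^ 2 := by nlinarith
  have hN : 0 < 1 - (s * cos x) ^ 2 := by nlinarith
  have hT : 0 < 1 + (1 - s ^ 2) * cos x ^ 2 := by positivity
  have hsqN : √(1 - s ^ 2 * cos x ^ 2) ≠ 0 := by rw [← mul_pow]; exact (sqrt_pos.2 hN).ne'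
  have hk_eq : k = √(1 - s ^ 2) / √(2 - s ^ 2) := by
    rw [← sqrt_div hc.le, ← hk2, sqrt_sq hk.le]
  have h1k : 1 - k ^ 2 * sin x ^ 2 = (1 + (1 - s ^ 2) * cos x ^ 2) / (2 - s ^ 2) := by
    rw [hk2]
    field_simp
    linear_combination (s ^ 2 - 1) * sin_sq x
  rw [sin_arcsin_sq_mul_tan_arcsin_sq (by linarith) (by linarith),
    radicand_arcsin_mul_cos hc.ne' hN.ne', h1k, sqrt_div hT.le, hk_eq,
    sqrt_div (by positivity), sqrt_mul (by positivity), sqrt_sq (by positivity),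
    sqrt_mul hc.le, abs_div, abs_neg, abs_of_pos (by positivity), abs_of_pos (by positivity)]
  field_simp

theorem rotor_on_time_elliptic
    (s β k : ℝ) (hs : s ∈ Set.Ioo (0:ℝ) 1)
    (hβ : β = s ^ 2 / (2 * Real.sqrt (1 - s ^ 2)))
    (hk : 0 < k) (hk2 : k ^ 2 = (1 - s ^ 2) / (2 - s ^ 2)) :
    (∫ θ in (0:ℝ)..(Real.arcsin s),
        2 / Real.sqrt (4 * β ^ 2 - Real.sin θ ^ 2 * Real.tan θ ^ 2))
      = (2 * k / s) * ellK (k ^ 2) := by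
  obtain ⟨hs0, hs1⟩ := hs
  have h4β : 4 * β ^ 2 = s ^ 4 / (1 - s ^ 2) := by
    rw [hβ, div_pow, mul_pow, sq_sqrt (by nlinarith)]
    field_simp
    ring
  have hderiv : ∀ x ∈ Ioo 0 (π / 2), HasDerivWithinAt (fun y => arcsin (s * cos y))
      (-(s * sin x) / √(1 - (s * cos x) ^ 2)) (Ioo 0 (π / 2)) x := fun x hx => by
    obtain ⟨hu0, hus⟩ := mul_cos_mem_Ioo hs0 hx
    exact (hasDerivAt_arcsin_mul_cos (by linarith) (by linarith)).hasDerivWithinAt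
  have hinj : InjOn (fun y => arcsin (s * cos y)) (Ioo 0 (π / 2)) :=
    (injOn_arcsin_mul_cos hs0 hs1.le).mono
      (Ioo_subset_Icc_self.trans (Icc_subset_Icc_right (by linarith [pi_pos])))
  -- the integrand is singular at `arcsin s`, so we change variables in the form that
  -- needs neither continuity nor integrability
  rw [integral_of_le (arcsin_pos.2 hs0).le, MeasureTheory.integral_Ioc_eq_integral_Ioo,
    ← image_arcsin_mul_cos_Ioo hs0 hs1.le,
    MeasureTheory.integral_image_eq_integral_abs_deriv_smul measurableSet_Ioo hderiv hinj,
    ellK, integral_of_le (by positivity), MeasureTheory.integral_Ioc_eq_integral_Ioo,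
    ← MeasureTheory.integral_const_mul]
  refine MeasureTheory.setIntegral_congr_fun measurableSet_Ioo fun x hx => ?_
  rw [smul_eq_mul, h4β]
  exact abs_deriv_mul_integrand_arcsin_mul_cos hs0 hs1 hk hk2 hx
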